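/- arXiv:1307.6408 — 2 statements merged into one kernel-verified Lean document; each statement's English description precedes it below -/
import Mathlib

section
/- Let φ : A* → A* be a morphism, u a non-empty immortal word over bounded letters, and k ≥ 1. Then the infinite word u · φ^k(u) · φ^{2k}(u) · φ^{3k}(u) · ⋯ is eventually periodic; explicitly, if φ^s(u) = φ^{s+t}(u) with t > 0, and ℓ₀, ℓ₁ are chosen so that ℓ₀k ≥ s and (ℓ₁ − ℓ₀)k is a positive multiple of t, then the infinite word equals u·φ^k(u)⋯φ^{ℓ₀k}(u) followed by the infinite repetition of φ^{(ℓ₀+1)k}(u)·φ^{(ℓ₀+2)k}(u)⋯φ^{ℓ₁k}(u). -/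
def WordHom {A : Type*} (φ : List A → List A) : Prop :=
  ∀ x y : List A, φ (x ++ y) = φ x ++ φ y

def BoundedLetter {A : Type*} (φ : List A → List A) (a : A) : Prop :=
  (Set.range fun j : ℕ => φ^[j] [a]).Finite

/-- The `n`-th segment `φ^{nk}(u)` of the infinite word `u·φ^k(u)·φ^{2k}(u)·⋯`. -/
def segWord {A : Type*} (φ : List A → List A) (u : List A) (k n : ℕ) : List A :=
  φ^[n * k] u

/-- Concatenation of the first `n` segments. -/
def partialJoin {A : Type*} (φ : List A → List A) (u : List A) (k n : ℕ) : List A :=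
  ((List.range n).map (segWord φ u k)).flatten

/-- The infinite word `u·φ^k(u)·φ^{2k}(u)·⋯` as a function `ℕ → A`
(well defined at position `i` since each segment is non-empty when `u` is immortal). -/
def infConcat {A : Type*} [Inhabited A] (φ : List A → List A) (u : List A) (k : ℕ)
    (i : ℕ) : A :=
  (partialJoin φ u k (i + 1)).getD i default

private lemma partialJoin_succ' {A : Type*} (φ : List A → List A) (u : List A) (k n : ℕ) :
    partialJoin φ u k (n + 1) = partialJoin φ u k n ++ segWord φ u k n := by
  simp [partialJoin, List.range_succ]

private lemma partialJoin_add' {A : Type*} (φ : List A → List A) (u : List A) (k a b : ℕ) :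
    partialJoin φ u k (a + b) =
      partialJoin φ u k a ++ ((List.range b).map (fun j => segWord φ u k (a + j))).flatten := by
  simp [partialJoin, List.range_add, List.map_map, Function.comp_def]

private lemma partialJoin_prefix' {A : Type*} (φ : List A → List A) (u : List A) (k : ℕ)
    {m n : ℕ} (h : m ≤ n) : partialJoin φ u k m <+: partialJoin φ u k n := by
  induction n, h using Nat.le_induction with
  | base => exact List.prefix_refl _
  | succ n _ ih =>
      refine ih.trans ?_
      rw [partialJoin_succ']
      exact List.prefix_append _ _

private lemma partialJoin_length_ge {A : Type*} (φ : List A → List A) (u : List A) (k : ℕ)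
    (himm : ∀ j : ℕ, φ^[j] u ≠ []) (n : ℕ) : n ≤ (partialJoin φ u k n).length := by
  induction n with
  | zero => simp
  | succ n ih =>
      rw [partialJoin_succ', List.length_append]
      have : 0 < (segWord φ u k n).length := List.length_pos_iff.mpr (himm _)
      omega

private lemma getD_of_prefix {A : Type*} [Inhabited A] {l l' : List A}
    (h : l <+: l') {i : ℕ} (hi : i < l.length) : l'.getD i default = l.getD i default := by
  obtain ⟨z, rfl⟩ := h
  exact List.getD_append _ _ _ _ hi

private lemma infConcat_eq {A : Type*} [Inhabited A] (φ : List A → List A) (u : List A)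
    (k : ℕ) (himm : ∀ j : ℕ, φ^[j] u ≠ []) {p N : ℕ}
    (hp : p < (partialJoin φ u k N).length) :
    infConcat φ u k p = (partialJoin φ u k N).getD p default := by
  have h1 : p < (partialJoin φ u k (p + 1)).length :=
    lt_of_lt_of_le (Nat.lt_succ_self p) (partialJoin_length_ge φ u k himm (p + 1))
  rcases le_total (p + 1) N with h | h
  · exact (getD_of_prefix (partialJoin_prefix' φ u k h) h1).symm
  · exact getD_of_prefix (partialJoin_prefix' φ u k h) hp

theorem stmt_4 {A : Type*} [Inhabited A] (φ : List A → List A) (hφ : WordHom φ)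
    (u : List A) (hu : u ≠ []) (k : ℕ) (hk : 1 ≤ k)
    (hbdd : ∀ a ∈ u, BoundedLetter φ a)
    (himm : ∀ j : ℕ, φ^[j] u ≠ [])
    (s t : ℕ) (ht : 0 < t) (hst : φ^[s] u = φ^[s + t] u)
    (ℓ₀ ℓ₁ : ℕ) (h0 : s ≤ ℓ₀ * k) (h01 : ℓ₀ < ℓ₁) (hmul : t ∣ (ℓ₁ - ℓ₀) * k) :
    -- with `x = u·φ^k(u)⋯φ^{ℓ₀k}(u)` and `y = φ^{(ℓ₀+1)k}(u)⋯φ^{ℓ₁k}(u)`,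
    -- the infinite word equals `x · y^ω`
    (∀ i, i < (partialJoin φ u k (ℓ₀ + 1)).length →
        infConcat φ u k i = (partialJoin φ u k (ℓ₀ + 1)).getD i default) ∧
    (∀ i, infConcat φ u k ((partialJoin φ u k (ℓ₀ + 1)).length + i) =
        (((List.range (ℓ₁ - ℓ₀)).map (fun j => segWord φ u k (ℓ₀ + 1 + j))).flatten).getD
          (i % (((List.range (ℓ₁ - ℓ₀)).map
            (fun j => segWord φ u k (ℓ₀ + 1 + j))).flatten).length) default) := by
  set d := ℓ₁ - ℓ₀ with hd
  have hdpos : 0 < d := by omega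
  set X := partialJoin φ u k (ℓ₀ + 1) with hX
  set Y := ((List.range d).map (fun j => segWord φ u k (ℓ₀ + 1 + j))).flatten with hY
  -- one-step periodicity
  have per1 : ∀ j, s ≤ j → φ^[j + t] u = φ^[j] u := by
    intro j hj
    obtain ⟨c, rfl⟩ := Nat.exists_eq_add_of_le hj
    have e1 : s + c + t = c + (s + t) := by omega
    have e2 : s + c = c + s := by omega
    rw [e1, Function.iterate_add_apply, ← hst, e2, Function.iterate_add_apply]
  have perM : ∀ m j, s ≤ j → φ^[j + m * t] u = φ^[j] u := by
    intro m
    induction m with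
    | zero => simp
    | succ m ih =>
        intro j hj
        have e : j + (m + 1) * t = (j + m * t) + t := by ring
        rw [e, per1 _ (by omega), ih j hj]
  -- segment periodicity
  obtain ⟨c, hc⟩ := hmul
  have segPer : ∀ n m, ℓ₀ ≤ n → segWord φ u k (n + m * d) = segWord φ u k n := by
    intro n m hn
    have hs' : s ≤ n * k := le_trans h0 (Nat.mul_le_mul_right k hn)
    have e : (n + m * d) * k = n * k + (m * c) * t := by
      have : (n + m * d) * k = n * k + m * (d * k) := by ring
      rw [this, hc]; ring
    unfold segWord
    rw [e, perM _ _ hs']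
  -- partialJoin formula
  have hA : ∀ m, partialJoin φ u k (ℓ₀ + 1 + m * d) = X ++ (List.replicate m Y).flatten := by
    intro m
    induction m with
    | zero => simp [hX]
    | succ m ih =>
        have e : ℓ₀ + 1 + (m + 1) * d = (ℓ₀ + 1 + m * d) + d := by ring
        rw [e, partialJoin_add', ih]
        have hYm : ((List.range d).map (fun j => segWord φ u k (ℓ₀ + 1 + m * d + j))).flatten
            = Y := by
          rw [hY]
          congr 1
          apply List.map_congr_left
          intro j _
          have e2 : ℓ₀ + 1 + m * d + j = (ℓ₀ + 1 + j) + m * d := by omega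
          rw [e2, segPer _ _ (by omega)]
        rw [hYm, List.replicate_succ', List.flatten_append, List.append_assoc]
        simp
  have hLpos : 0 < Y.length := by
    rw [List.length_pos_iff, hY]
    simp only [ne_eq, List.flatten_eq_nil_iff]
    intro h
    exact himm _ (h (segWord φ u k (ℓ₀ + 1 + 0))
      (List.mem_map.mpr ⟨0, List.mem_range.mpr hdpos, rfl⟩))
  have hlen : ∀ m, (partialJoin φ u k (ℓ₀ + 1 + m * d)).length = X.length + m * Y.length := by
    intro m
    rw [hA m, List.length_append, List.length_flatten, List.map_replicate, List.sum_replicate,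
      smul_eq_mul]
  constructor
  · intro i hi
    exact infConcat_eq φ u k himm hi
  · intro i
    set L := Y.length with hL
    set q := i / L with hq
    have hdm : q * L + i % L = i := by rw [mul_comm]; exact Nat.div_add_mod i L
    have hr : i % L < L := Nat.mod_lt _ hLpos
    have hbound : X.length + i < (partialJoin φ u k (ℓ₀ + 1 + (q + 1) * d)).length := by
      rw [hlen]
      have : i < (q + 1) * L := by
        have : (q + 1) * L = q * L + L := by ring
        omega
      omega
    rw [infConcat_eq φ u k himm hbound, hA (q + 1), List.replicate_succ', List.flatten_append]
    rw [List.getD_append_right _ _ _ _ (Nat.le_add_right _ _), Nat.add_sub_cancel_left]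
    have hlen2 : (List.replicate q Y).flatten.length = q * L := by
      rw [List.length_flatten, List.map_replicate, List.sum_replicate, smul_eq_mul]
    have h2 : (List.replicate q Y).flatten.length ≤ i := by rw [hlen2]; omega
    rw [List.getD_append_right _ _ _ _ h2, hlen2]
    simp only [List.flatten_cons, List.flatten_nil, List.append_nil]
    congr 1
    omega
end

section
/- Let φ : A* → A* be a morphism, v a primitive non-empty word containing an unbounded letter, and m ≥ 1 such that for every t ≥ 1 the word φ^{tm}(v) is a factor of v^ω aligned as φ^{tm}(v) = s_t·v^{k_t}·p_t with p_t·s_t = v and s_t a suffix of v. Then there exist t₁ < t₂ with s_{t₁} = s_{t₂}, and setting z = s_{t₁}·p_{t₁} and ℓ = m(t₂ − t₁), we have φ^ℓ(z) = z^k for some k ≥ 2. -/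
def wpow {A : Type*} (w : List A) (k : ℕ) : List A := (List.replicate k w).flatten

section Aux
variable {A : Type*}

theorem wpow_zero (w : List A) : wpow w 0 = [] := rfl

theorem wpow_succ (w : List A) (k : ℕ) : wpow w (k + 1) = w ++ wpow w k := by
  simp [wpow, List.replicate_succ]

theorem wpow_one (w : List A) : wpow w 1 = w := by simp [wpow]

theorem wpow_add (w : List A) (a b : ℕ) : wpow w (a + b) = wpow w a ++ wpow w b := by
  induction a with
  | zero => simp [wpow_zero]
  | succ a ih => rw [Nat.succ_add, wpow_succ, wpow_succ, ih, List.append_assoc]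

theorem wpow_succ' (w : List A) (k : ℕ) : wpow w (k + 1) = wpow w k ++ w := by
  rw [wpow_add, wpow_one]

theorem wpow_nil (j : ℕ) : wpow ([] : List A) j = [] := by
  induction j with
  | zero => rfl
  | succ j ih => rw [wpow_succ, ih]; rfl

theorem length_wpow (w : List A) (k : ℕ) : (wpow w k).length = k * w.length := by
  induction k with
  | zero => simp [wpow_zero]
  | succ k ih => rw [wpow_succ]; simp [ih]; ring

theorem prefix_of_prefix_le {l₁ l₂ l₃ : List A} (h1 : l₁ <+: l₃) (h2 : l₂ <+: l₃)
    (h : l₁.length ≤ l₂.length) : l₁ <+: l₂ := by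
  obtain ⟨r₂, rfl⟩ := h2
  obtain ⟨r₁, e⟩ := h1
  have : l₁ = (l₂ ++ r₂).take l₁.length := by
    rw [← e]; simp
  rw [List.take_append] at this
  have h0 : l₁.length - l₂.length = 0 := by omega
  rw [h0] at this
  simp at this
  exact this ▸ (l₂.take_prefix l₁.length)

theorem append_prefix_left {l₁ l₂ : List A} (l : List A) (h : l₁ <+: l₂) :
    l ++ l₁ <+: l ++ l₂ := by
  obtain ⟨t, rfl⟩ := h
  exact ⟨t, List.append_assoc _ _ _⟩

theorem self_prefix_wpow (w : List A) {k : ℕ} (hk : 1 ≤ k) : w <+: wpow w k := by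
  obtain ⟨k', rfl⟩ := Nat.exists_eq_add_of_le hk
  rw [Nat.add_comm, wpow_succ]
  exact List.prefix_append _ _

theorem exists_root_aux : ∀ (n : ℕ) (x y : List A), x.length + y.length ≤ n →
    x ++ y = y ++ x → ∃ (w : List A) (a b : ℕ), x = wpow w a ∧ y = wpow w b := by
  intro n
  induction n with
  | zero =>
    intro x y hlen _
    have hx : x = [] := by cases x <;> simp_all
    have hy : y = [] := by cases y <;> simp_all
    exact ⟨[], 0, 0, by simp [hx, wpow_zero], by simp [hy, wpow_zero]⟩
  | succ n ih =>
    intro x y hlen h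
    rcases eq_or_ne x [] with rfl | hx
    · exact ⟨y, 0, 1, (wpow_zero y).symm, (wpow_one y).symm⟩
    rcases eq_or_ne y [] with rfl | hy
    · exact ⟨x, 1, 0, (wpow_one x).symm, (wpow_zero x).symm⟩
    rcases le_total x.length y.length with hle | hle
    · have hpre : x <+: y :=
        prefix_of_prefix_le (h ▸ List.prefix_append x y) (List.prefix_append y x) hle
      obtain ⟨y', rfl⟩ := hpre
      have h' : x ++ y' = y' ++ x := by
        have h2 : x ++ (x ++ y') = x ++ (y' ++ x) := by
          rw [h, List.append_assoc]
        exact List.append_cancel_left h2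
      have hxpos : 0 < x.length := List.length_pos_iff.mpr hx
      have hlen' : x.length + y'.length ≤ n := by
        simp only [List.length_append] at hlen; omega
      obtain ⟨w, a, b, hxw, hyw⟩ := ih x y' hlen' h'
      exact ⟨w, a, a + b, hxw, by rw [wpow_add, ← hxw, ← hyw]⟩
    · have hpre : y <+: x :=
        prefix_of_prefix_le (h ▸ List.prefix_append y x) (List.prefix_append x y) hle
      obtain ⟨x', rfl⟩ := hpre
      have h' : x' ++ y = y ++ x' := by
        have h2 : y ++ (x' ++ y) = y ++ (y ++ x') := by
          rw [← List.append_assoc, ← h, List.append_assoc]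
        exact List.append_cancel_left h2
      have hypos : 0 < y.length := List.length_pos_iff.mpr hy
      have hlen' : x'.length + y.length ≤ n := by
        simp only [List.length_append] at hlen; omega
      obtain ⟨w, a, b, hxw, hyw⟩ := ih x' y hlen' h'
      exact ⟨w, b + a, b, by rw [wpow_add, ← hxw, ← hyw], hyw⟩

theorem exists_root {x y : List A} (h : x ++ y = y ++ x) :
    ∃ (w : List A) (a b : ℕ), x = wpow w a ∧ y = wpow w b :=
  exists_root_aux (x.length + y.length) x y le_rfl h

theorem comm_of_pow_eq_pow {x y : List A} {a b : ℕ} (ha : 1 ≤ a) (hb : 1 ≤ b)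
    (h : wpow x a = wpow y b) : x ++ y = y ++ x := by
  rcases Nat.lt_or_ge a 2 with ha2 | ha2
  · have : a = 1 := by omega
    subst this
    rw [wpow_one] at h
    rw [h, ← wpow_succ', wpow_succ]
  rcases Nat.lt_or_ge b 2 with hb2 | hb2
  · have : b = 1 := by omega
    subst this
    rw [wpow_one] at h
    rw [← h, ← wpow_succ, wpow_succ']
  · have hlen : a * x.length = b * y.length := by
      have := congrArg List.length h
      simpa [length_wpow] using this
    have hxy : x.length + y.length ≤ a * x.length := by
      have h1 : 2 * x.length ≤ a * x.length := Nat.mul_le_mul_right _ ha2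
      have h2 : 2 * y.length ≤ b * y.length := Nat.mul_le_mul_right _ hb2
      omega
    have hp1 : x ++ y <+: wpow x a := by
      have h1 : x ++ y <+: wpow x (a + 1) := by
        rw [wpow_succ, h]
        exact append_prefix_left x (self_prefix_wpow y hb)
      refine prefix_of_prefix_le h1 ?_ ?_
      · rw [wpow_succ']; exact List.prefix_append _ _
      · simp only [List.length_append, length_wpow]; omega
    have hp2 : y ++ x <+: wpow x a := by
      have e : y ++ wpow x a = wpow x a ++ y := by
        rw [h, ← wpow_succ, wpow_succ']
      have h1 : y ++ x <+: wpow x a ++ y := by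
        rw [← e]
        exact append_prefix_left y (self_prefix_wpow x ha)
      refine prefix_of_prefix_le h1 (List.prefix_append _ _) ?_
      simp only [List.length_append, length_wpow]; omega
    have := prefix_of_prefix_le hp1 hp2 (by simp [Nat.add_comm])
    exact this.eq_of_length (by simp [Nat.add_comm])

theorem wpow_cons (c : A) (w : List A) (j : ℕ) :
    wpow (c :: w) j ++ [c] = c :: wpow (w ++ [c]) j := by
  induction j with
  | zero => simp [wpow_zero]
  | succ j ih =>
    rw [wpow_succ, wpow_succ]
    simp only [List.cons_append, List.append_assoc]
    rw [ih]
    simp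

theorem rot_pow : ∀ (s p w : List A) (j : ℕ), s ++ p = wpow w j →
    ∃ w', p ++ s = wpow w' j ∧ w'.length = w.length := by
  intro s
  induction s with
  | nil => exact fun p w j h => ⟨w, by simpa using h, rfl⟩
  | cons c s₁ ih =>
    intro p w j h
    rw [List.cons_append] at h
    cases j with
    | zero => rw [wpow_zero] at h; exact absurd h (by simp)
    | succ j =>
      cases w with
      | nil => rw [wpow_nil] at h; exact absurd h (by simp)
      | cons d w₁ =>
        have hd : d = c := by
          rw [wpow_succ, List.cons_append] at h
          exact (List.cons.injEq _ _ _ _ ▸ h.symm).1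
        subst hd
        have key : s₁ ++ (p ++ [d]) = wpow (w₁ ++ [d]) (j + 1) := by
          have h2 : (d :: (s₁ ++ p)) ++ [d] = wpow (d :: w₁) (j + 1) ++ [d] := by rw [h]
          rw [wpow_cons] at h2
          simp only [List.cons_append, List.cons.injEq, true_and] at h2
          rw [← h2, List.append_assoc]
        obtain ⟨w', hw', hlen'⟩ := ih (p ++ [d]) (w₁ ++ [d]) (j + 1) key
        refine ⟨w', ?_, ?_⟩
        · rw [← hw']; simp
        · simp at hlen' ⊢; omega

theorem suffix_eq_of_length {l₁ l₂ v : List A} (h1 : l₁ <:+ v) (h2 : l₂ <:+ v)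
    (h : l₁.length = l₂.length) : l₁ = l₂ := by
  obtain ⟨t₁, e₁⟩ := h1
  obtain ⟨t₂, e₂⟩ := h2
  exact (List.append_inj' (e₁.trans e₂.symm) h).2

theorem sandwich (s p : List A) : ∀ k, s ++ (wpow (p ++ s) k ++ p) = wpow (s ++ p) (k + 1) := by
  intro k
  induction k with
  | zero => simp [wpow_zero, wpow_one]
  | succ k ih =>
    rw [wpow_succ (p ++ s), wpow_succ (s ++ p), ← ih]
    simp [List.append_assoc]

end Aux

def Primitive {A : Type*} (v : List A) : Prop :=
  ∀ (z : List A) (k : ℕ), v = wpow z k → k = 1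

section Aux2
variable {A : Type*} {φ : List A → List A}

theorem hom_nil (hφ : WordHom φ) : φ [] = [] := by
  have h := hφ [] []
  simp only [List.append_nil] at h
  have := congrArg List.length h
  simp only [List.length_append] at this
  exact List.length_eq_zero_iff.mp (by omega)

theorem hom_iterate (hφ : WordHom φ) (n : ℕ) : WordHom (φ^[n]) := by
  induction n with
  | zero => intro x y; simp
  | succ n ih =>
    intro x y
    rw [Function.iterate_succ_apply', Function.iterate_succ_apply',
      Function.iterate_succ_apply', ih, hφ]

theorem hom_wpow (hφ : WordHom φ) (w : List A) (k : ℕ) :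
    φ (wpow w k) = wpow (φ w) k := by
  induction k with
  | zero => rw [wpow_zero, wpow_zero, hom_nil hφ]
  | succ k ih => rw [wpow_succ, wpow_succ, hφ, ih]

theorem hom_length_le [Fintype A] (hφ : WordHom φ) (w : List A) :
    (φ w).length ≤ (Finset.univ.sup fun b : A => (φ [b]).length) * w.length := by
  induction w with
  | nil => simp [hom_nil hφ]
  | cons b w ih =>
    have : φ (b :: w) = φ [b] ++ φ w := by
      rw [← hφ]; rfl
    rw [this]
    simp only [List.length_append, List.length_cons]
    have hb : (φ [b]).length ≤ Finset.univ.sup fun b : A => (φ [b]).length :=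
      Finset.le_sup (f := fun b : A => (φ [b]).length) (Finset.mem_univ b)
    nlinarith

theorem iter_length_le [Fintype A] (hφ : WordHom φ) (r : ℕ) (w : List A) :
    (φ^[r] w).length ≤ (max (Finset.univ.sup fun b : A => (φ [b]).length) 1) ^ r * w.length := by
  induction r generalizing w with
  | zero => simp
  | succ r ih =>
    rw [Function.iterate_succ_apply]
    calc (φ^[r] (φ w)).length
        ≤ (max (Finset.univ.sup fun b : A => (φ [b]).length) 1) ^ r * (φ w).length := ih _
      _ ≤ (max (Finset.univ.sup fun b : A => (φ [b]).length) 1) ^ r *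
            ((max (Finset.univ.sup fun b : A => (φ [b]).length) 1) * w.length) := by
          apply Nat.mul_le_mul_left
          exact le_trans (hom_length_le hφ w)
            (Nat.mul_le_mul_right _ (le_max_left _ _))
      _ = _ := by ring

theorem kk_unbounded [Fintype A] (hφ : WordHom φ)
    (v : List A) (a : A) (hav : a ∈ v) (hab : ¬ BoundedLetter φ a)
    (m : ℕ) (hm : 1 ≤ m) (s p : ℕ → List A) (kk : ℕ → ℕ)
    (halign : ∀ t : ℕ, 1 ≤ t →
      φ^[t * m] v = s t ++ wpow v (kk t) ++ p t ∧
      p t ++ s t = v ∧ (s t) <:+ v)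
    (T K : ℕ) : ∃ t, T < t ∧ K < kk t := by
  by_contra hcon
  push_neg at hcon
  apply hab
  set C := max (Finset.univ.sup fun b : A => (φ [b]).length) 1 with hC
  have hC1 : 1 ≤ C := le_max_right _ 1
  obtain ⟨l1, l2, rfl⟩ := List.append_of_mem hav
  set v := l1 ++ a :: l2 with hv
  have hit : ∀ j, (φ^[j] [a]).length ≤ (φ^[j] v).length := by
    intro j
    have h1 : φ^[j] v = φ^[j] l1 ++ (φ^[j] [a] ++ φ^[j] l2) := by
      rw [hv, show l1 ++ a :: l2 = l1 ++ ([a] ++ l2) from rfl,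
        hom_iterate hφ j, hom_iterate hφ j]
    have := congrArg List.length h1
    simp only [List.length_append] at this
    omega
  set B := C ^ m * ((K + 2) * v.length) with hB
  have hbig : ∀ j, (T + 1) * m ≤ j → (φ^[j] [a]).length ≤ B := by
    intro j hj
    have hmpos : 0 < m := hm
    have ht : T + 1 ≤ j / m := (Nat.le_div_iff_mul_le hmpos).mpr hj
    obtain ⟨e, hps, hsuf⟩ := halign (j / m) (by omega)
    have hkt : kk (j / m) ≤ K := hcon _ (by omega)
    have hjeq : j % m + j / m * m = j := Nat.mod_add_div' j m
    have hlen1 : (φ^[j / m * m] v).length ≤ (K + 2) * v.length := by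
      have := congrArg List.length e
      simp only [List.length_append, length_wpow] at this
      have hs : (s (j / m)).length ≤ v.length := hsuf.length_le
      have hp : (p (j / m)).length ≤ v.length := by
        have := congrArg List.length hps
        simp only [List.length_append] at this
        omega
      have hkk : kk (j / m) * v.length ≤ K * v.length :=
        Nat.mul_le_mul_right _ hkt
      have hexp : (K + 2) * v.length = K * v.length + v.length + v.length := by ring
      omega
    calc (φ^[j] [a]).length ≤ (φ^[j] v).length := hit j
      _ = (φ^[j % m] (φ^[j / m * m] v)).length := by
          rw [← Function.iterate_add_apply, hjeq]
      _ ≤ C ^ (j % m) * (φ^[j / m * m] v).length := iter_length_le hφ _ _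
      _ ≤ C ^ m * ((K + 2) * v.length) := by
          apply Nat.mul_le_mul
          · exact Nat.pow_le_pow_right hC1 (le_of_lt (Nat.mod_lt _ hmpos))
          · exact hlen1
  have hsub : (Set.range fun j : ℕ => φ^[j] [a]) ⊆
      ((fun j : ℕ => φ^[j] [a]) '' Set.Iio ((T + 1) * m)) ∪ {l : List A | l.length ≤ B} := by
    rintro _ ⟨j, rfl⟩
    rcases Nat.lt_or_ge j ((T + 1) * m) with hj | hj
    · exact Or.inl ⟨j, hj, rfl⟩
    · exact Or.inr (hbig j hj)
  exact Set.Finite.subset (((Set.finite_Iio _).image _).union (List.finite_length_le A B)) hsub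

end Aux2

section Main
variable {A : Type*}

theorem main_pair (φ : List A → List A) (hφ : WordHom φ)
    (v : List A) (hvne : v ≠ []) (hprim : Primitive v)
    (m : ℕ) (s p : ℕ → List A) (kk : ℕ → ℕ)
    (halign : ∀ t : ℕ, 1 ≤ t →
      φ^[t * m] v = s t ++ wpow v (kk t) ++ p t ∧
      p t ++ s t = v ∧ (s t) <:+ v)
    (t₁ t₂ : ℕ) (ht₁ : 1 ≤ t₁) (h12 : t₁ < t₂) (hs : s t₁ = s t₂)
    (hk : 2 * kk t₁ + 1 ≤ kk t₂) :
    ∃ k : ℕ, 2 ≤ k ∧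
      φ^[m * (t₂ - t₁)] (s t₁ ++ p t₁) = wpow (s t₁ ++ p t₁) k := by
  obtain ⟨e₁, hps₁, hsuf₁⟩ := halign t₁ ht₁
  obtain ⟨e₂, hps₂, hsuf₂⟩ := halign t₂ (by omega)
  rw [← hs] at e₂ hps₂
  have hp : p t₂ = p t₁ := by
    have h0 : p t₂ ++ s t₁ = p t₁ ++ s t₁ := by rw [hps₁, hps₂]
    exact (List.append_inj' h0 rfl).1
  rw [hp] at e₂
  have hvpos : 0 < v.length := List.length_pos_iff.mpr hvne
  have e₁' : φ^[t₁ * m] v = wpow (s t₁ ++ p t₁) (kk t₁ + 1) := by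
    rw [e₁, show wpow v (kk t₁) = wpow (p t₁ ++ s t₁) (kk t₁) from by rw [hps₁],
      List.append_assoc]
    exact sandwich _ _ _
  have e₂' : φ^[t₂ * m] v = wpow (s t₁ ++ p t₁) (kk t₂ + 1) := by
    rw [e₂, show wpow v (kk t₂) = wpow (p t₁ ++ s t₁) (kk t₂) from by rw [hps₁],
      List.append_assoc]
    exact sandwich _ _ _
  have hadd : m * (t₂ - t₁) + t₁ * m = t₂ * m := by
    obtain ⟨d, rfl⟩ := Nat.exists_eq_add_of_le h12.le
    rw [Nat.add_sub_cancel_left]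
    ring
  have key : wpow (φ^[m * (t₂ - t₁)] (s t₁ ++ p t₁)) (kk t₁ + 1) =
      wpow (s t₁ ++ p t₁) (kk t₂ + 1) := by
    rw [← hom_wpow (hom_iterate hφ _), ← e₁', ← Function.iterate_add_apply, hadd, e₂']
  have comm := comm_of_pow_eq_pow (by omega) (by omega) key
  obtain ⟨w, i, j, hXw, hzw⟩ := exists_root comm
  have hj : j = 1 := by
    obtain ⟨w', hw', _⟩ := rot_pow (s t₁) (p t₁) w j hzw
    exact hprim w' j (by rw [← hps₁]; exact hw')
  subst hj
  rw [wpow_one] at hzw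
  rw [← hzw] at hXw
  refine ⟨i, ?_, hXw⟩
  have hzlen : (s t₁ ++ p t₁).length = v.length := by
    have := congrArg List.length hps₁
    simp only [List.length_append] at this ⊢
    omega
  have hlen := congrArg List.length key
  rw [hXw] at hlen
  simp only [length_wpow] at hlen
  have heq : (kk t₁ + 1) * i = kk t₂ + 1 := by
    have h2 : ((kk t₁ + 1) * i) * (s t₁ ++ p t₁).length =
        (kk t₂ + 1) * (s t₁ ++ p t₁).length := by rw [← hlen]; ring
    exact Nat.eq_of_mul_eq_mul_right (hzlen ▸ hvpos) h2
  rcases i with _ | _ | i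
  · omega
  · omega
  · omega

end Main

theorem stmt_12 {A : Type*} [Fintype A] (φ : List A → List A) (hφ : WordHom φ)
    (v : List A) (hvne : v ≠ []) (hprim : Primitive v)
    (hub : ∃ a ∈ v, ¬ BoundedLetter φ a)
    (m : ℕ) (hm : 1 ≤ m)
    (s p : ℕ → List A) (kk : ℕ → ℕ)
    (halign : ∀ t : ℕ, 1 ≤ t →
      φ^[t * m] v = s t ++ wpow v (kk t) ++ p t ∧
      p t ++ s t = v ∧ (s t) <:+ v) :
    ∃ t₁ t₂ : ℕ, 1 ≤ t₁ ∧ t₁ < t₂ ∧ s t₁ = s t₂ ∧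
      ∃ k : ℕ, 2 ≤ k ∧
        φ^[m * (t₂ - t₁)] (s t₁ ++ p t₁) = wpow (s t₁ ++ p t₁) k := by
  obtain ⟨a, hav, hab⟩ := hub
  have H : ∀ T K, ∃ t, T < t ∧ K < kk t :=
    kk_unbounded hφ v a hav hab m hm s p kk halign
  let u : ℕ → ℕ := fun n =>
    Nat.rec (Classical.choose (H 0 0))
      (fun _ prev => Classical.choose (H prev (2 * kk prev))) n
  have hu0 : 0 < u 0 ∧ 0 < kk (u 0) := Classical.choose_spec (H 0 0)
  have huS : ∀ n, u n < u (n + 1) ∧ 2 * kk (u n) < kk (u (n + 1)) := fun n =>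
    Classical.choose_spec (H (u n) (2 * kk (u n)))
  have humono : StrictMono u := strictMono_nat_of_lt_succ fun n => (huS n).1
  have hkmono : StrictMono fun n => kk (u n) :=
    strictMono_nat_of_lt_succ fun n => by have := (huS n).2; simp; omega
  have hu1 : ∀ n, 1 ≤ u n := fun n => by
    have h1 := hu0.1
    have h2 : u 0 ≤ u n := humono.monotone (Nat.zero_le n)
    omega
  have hslen : ∀ n, (s (u n)).length < v.length + 1 := fun n => by
    have h := (halign (u n) (hu1 n)).2.2
    have := h.length_le
    omega
  obtain ⟨i, j, hne, hfe⟩ := Finite.exists_ne_map_eq_of_infinite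
    (fun n => (⟨(s (u n)).length, hslen n⟩ : Fin (v.length + 1)))
  have hfe' : (s (u i)).length = (s (u j)).length := by
    simpa using congrArg Fin.val hfe
  have hseq : s (u i) = s (u j) :=
    suffix_eq_of_length (halign _ (hu1 i)).2.2 (halign _ (hu1 j)).2.2 hfe'
  have hkey : ∀ i j : ℕ, i < j → 2 * kk (u i) + 1 ≤ kk (u j) := by
    intro i j hij
    have h1 := (huS i).2
    have h2 : kk (u (i + 1)) ≤ kk (u j) := hkmono.monotone (Nat.succ_le_of_lt hij)
    omega
  rcases hne.lt_or_gt with hij | hij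
  · exact ⟨u i, u j, hu1 i, humono hij, hseq,
      main_pair φ hφ v hvne hprim m s p kk halign (u i) (u j) (hu1 i)
        (humono hij) hseq (hkey i j hij)⟩
  · exact ⟨u j, u i, hu1 j, humono hij, hseq.symm,
      main_pair φ hφ v hvne hprim m s p kk halign (u j) (u i) (hu1 j)
        (humono hij) hseq.symm (hkey j i hij)⟩
end
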